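/- The axiom-level uniform interpolants satisfy: for a multiset Σ, let E := the conjunction of all p∘-free formulas of Σ. Then (1) Σ ⇒ E is derivable in G4iM, and (2) for any sequent C̄⇒D̄ with at most one succedent formula such that p∉V∘(C̄⇒D̄), if Σ,C̄⇒D̄ is an instance of an axiom (Ax or L⊥) of G4iM, then E,C̄⇒D̄ is derivable in G4iM. -/
import Mathlib


/-- Formulas of intuitionistic (monotone) modal logic over atoms `ℕ`,
with conjunction, disjunction, implication, falsum and a box modality. -/
inductive Fm : Type where
  | atom : ℕ → Fm
  | bot  : Fm
  | and  : Fm → Fm → Fm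
  | or   : Fm → Fm → Fm
  | imp  : Fm → Fm → Fm
  | box  : Fm → Fm
deriving DecidableEq

/-- `⊤` as the abbreviation `⊥ → ⊥`. -/
def Fm.top : Fm := Fm.imp Fm.bot Fm.bot
/-- Polarity-indexed variable sets: `Vb true φ = V⁺(φ)` and `Vb false φ = V⁻(φ)`. -/
def Vb : Bool → Fm → Finset ℕ
  | b, .atom q => if b then {q} else ∅
  | _, .bot => ∅
  | b, .and φ ψ => Vb b φ ∪ Vb b ψ
  | b, .or φ ψ => Vb b φ ∪ Vb b ψ
  | b, .imp φ ψ => Vb (!b) φ ∪ Vb b ψ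
  | b, .box φ => Vb b φ
/-- The terminating sequent calculus `G4iM`: Dyckhoff's `G4ip` with explicit
weakening, plus the monotone modal rules `M` and `LM→`.  Succedents are
`Option Fm` (at most one formula). -/
inductive G4 : Multiset Fm → Option Fm → Prop
  | ax (Γ : Multiset Fm) (p : ℕ) : G4 (Fm.atom p ::ₘ Γ) (some (Fm.atom p))
  | lbot (Γ : Multiset Fm) (Δ : Option Fm) : G4 (Fm.bot ::ₘ Γ) Δ
  | land (Γ : Multiset Fm) (Δ : Option Fm) (φ ψ : Fm) :
      G4 (φ ::ₘ ψ ::ₘ Γ) Δ → G4 (φ.and ψ ::ₘ Γ) Δ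
  | rand (Γ : Multiset Fm) (φ ψ : Fm) :
      G4 Γ (some φ) → G4 Γ (some ψ) → G4 Γ (some (φ.and ψ))
  | lor (Γ : Multiset Fm) (Δ : Option Fm) (φ ψ : Fm) :
      G4 (φ ::ₘ Γ) Δ → G4 (ψ ::ₘ Γ) Δ → G4 (φ.or ψ ::ₘ Γ) Δ
  | ror₁ (Γ : Multiset Fm) (φ ψ : Fm) : G4 Γ (some φ) → G4 Γ (some (φ.or ψ))
  | ror₂ (Γ : Multiset Fm) (φ ψ : Fm) : G4 Γ (some ψ) → G4 Γ (some (φ.or ψ))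
  | lpimp (Γ : Multiset Fm) (Δ : Option Fm) (p : ℕ) (ψ : Fm) :
      G4 (Fm.atom p ::ₘ ψ ::ₘ Γ) Δ →
      G4 (Fm.atom p ::ₘ (Fm.atom p).imp ψ ::ₘ Γ) Δ
  | landimp (Γ : Multiset Fm) (Δ : Option Fm) (φ₁ φ₂ ψ : Fm) :
      G4 (φ₁.imp (φ₂.imp ψ) ::ₘ Γ) Δ → G4 ((φ₁.and φ₂).imp ψ ::ₘ Γ) Δ
  | lorimp (Γ : Multiset Fm) (Δ : Option Fm) (φ₁ φ₂ ψ : Fm) :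
      G4 (φ₁.imp ψ ::ₘ φ₂.imp ψ ::ₘ Γ) Δ → G4 ((φ₁.or φ₂).imp ψ ::ₘ Γ) Δ
  | limpimp (Γ : Multiset Fm) (Δ : Option Fm) (φ₁ φ₂ ψ : Fm) :
      G4 (φ₂.imp ψ ::ₘ Γ) (some (φ₁.imp φ₂)) → G4 (ψ ::ₘ Γ) Δ →
      G4 ((φ₁.imp φ₂).imp ψ ::ₘ Γ) Δ
  | rimp (Γ : Multiset Fm) (φ ψ : Fm) :
      G4 (φ ::ₘ Γ) (some ψ) → G4 Γ (some (φ.imp ψ))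
  | lw (Γ : Multiset Fm) (Δ : Option Fm) (φ : Fm) : G4 Γ Δ → G4 (φ ::ₘ Γ) Δ
  | rw (Γ : Multiset Fm) (φ : Fm) : G4 Γ none → G4 Γ (some φ)
  | m (φ ψ : Fm) : G4 {φ} (some ψ) → G4 {φ.box} (some ψ.box)
  | lmimp (Γ : Multiset Fm) (Δ : Option Fm) (φ ψ θ : Fm) :
      G4 {φ} (some ψ) → G4 (φ.box ::ₘ θ ::ₘ Γ) Δ →
      G4 (φ.box ::ₘ (ψ.box).imp θ ::ₘ Γ) Δ

/-- Conjunction of a list of formulas (with `⊤ = ⊥ → ⊥` for the empty list). -/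
def bigConj (l : List Fm) : Fm := l.foldr Fm.and (Fm.bot.imp Fm.bot)

/-- The axiom-level `∃`-interpolant of a multiset `Sg`: the conjunction of all
`p∘`-free formulas of `Sg`. -/
noncomputable def axE (Sg : Multiset Fm) (p : ℕ) (o : Bool) : Fm :=
  bigConj ((Sg.filter fun χ => p ∉ Vb o χ).toList)

/-- Weight of a formula, used for the induction proving identity and
modus-ponens admissibility. -/
def wt : Fm → ℕ
  | .atom _ => 1
  | .bot => 1
  | .and φ ψ => wt φ + wt ψ + 1
  | .or φ ψ => wt φ + wt ψ + 1
  | .imp φ ψ => wt φ + wt ψ + 1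
  | .box φ => wt φ + 1

lemma G4.weak (Γ' : Multiset Fm) {Γ : Multiset Fm} {Δ : Option Fm}
    (h : G4 Γ Δ) : G4 (Γ' + Γ) Δ := by
  induction Γ' using Multiset.induction with
  | empty => simpa using h
  | cons a s ih => rw [Multiset.cons_add]; exact G4.lw _ _ _ ih

/-- Weakening in second position. -/
lemma G4.lw' {Γ : Multiset Fm} {Δ : Option Fm} {a : Fm} (x : Fm)
    (h : G4 (a ::ₘ Γ) Δ) : G4 (a ::ₘ x ::ₘ Γ) Δ := by
  rw [Multiset.cons_swap]; exact G4.lw _ _ _ h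

lemma G4.key : ∀ n : ℕ,
    (∀ C : Fm, wt C ≤ n → ∀ Γ : Multiset Fm, G4 (C ::ₘ Γ) (some C)) ∧
    (∀ A : Fm, wt A ≤ n → ∀ (B : Fm) (Γ : Multiset Fm) (Δ : Option Fm),
      G4 (B ::ₘ Γ) Δ → G4 (A ::ₘ A.imp B ::ₘ Γ) Δ) := by
  intro n
  induction n using Nat.strong_induction_on with
  | _ n IH =>
  constructor
  · intro C hC Γ
    match C with
    | .atom q => exact G4.ax Γ q
    | .bot => exact G4.lbot Γ _
    | .and φ ψ =>
        have h1 : wt φ < n := by simp [wt] at hC; omega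
        have h2 : wt ψ < n := by simp [wt] at hC; omega
        apply G4.rand
        · exact G4.land _ _ _ _ ((IH _ h1).1 φ le_rfl _)
        · apply G4.land
          rw [Multiset.cons_swap]
          exact (IH _ h2).1 ψ le_rfl _
    | .or φ ψ =>
        have h1 : wt φ < n := by simp [wt] at hC; omega
        have h2 : wt ψ < n := by simp [wt] at hC; omega
        exact G4.lor _ _ _ _ (G4.ror₁ _ _ _ ((IH _ h1).1 φ le_rfl _))
          (G4.ror₂ _ _ _ ((IH _ h2).1 ψ le_rfl _))
    | .imp φ ψ =>
        have h1 : wt φ < n := by simp [wt] at hC; omega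
        have h2 : wt ψ < n := by simp [wt] at hC; omega
        exact G4.rimp _ _ _
          ((IH _ h1).2 φ le_rfl ψ Γ _ ((IH _ h2).1 ψ le_rfl _))
    | .box φ =>
        have h1 : wt φ < n := by simp [wt] at hC; omega
        have base : G4 {Fm.box φ} (some (Fm.box φ)) := by
          apply G4.m
          have := (IH _ h1).1 φ le_rfl 0
          rwa [Multiset.cons_zero] at this
        have e : Fm.box φ ::ₘ Γ = Γ + {Fm.box φ} := by
          rw [add_comm, Multiset.singleton_add]
        rw [e]; exact G4.weak Γ base
  · intro A hA B Γ Δ hB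
    match A with
    | .atom q => exact G4.lpimp Γ Δ q B (G4.lw _ _ _ hB)
    | .bot => exact G4.lbot _ _
    | .and A₁ A₂ =>
        have h1 : wt A₁ < n := by simp [wt] at hA; omega
        have h2 : wt A₂ < n := by simp [wt] at hA; omega
        have step2 : G4 ((A₂.imp B) ::ₘ A₂ ::ₘ Γ) Δ := by
          rw [Multiset.cons_swap]
          exact (IH _ h2).2 A₂ le_rfl B Γ Δ hB
        have step1 := (IH _ h1).2 A₁ le_rfl (A₂.imp B) (A₂ ::ₘ Γ) Δ step2
        rw [Multiset.cons_swap]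
        apply G4.landimp
        rw [Multiset.cons_swap]
        apply G4.land
        rw [Multiset.cons_swap A₂ (A₁.imp (A₂.imp B))]
        exact step1
    | .or A₁ A₂ =>
        have h1 : wt A₁ < n := by simp [wt] at hA; omega
        have h2 : wt A₂ < n := by simp [wt] at hA; omega
        rw [Multiset.cons_swap]
        apply G4.lorimp
        rw [Multiset.cons_swap (A₂.imp B), Multiset.cons_swap (A₁.imp B)]
        apply G4.lor
        · exact (IH _ h1).2 A₁ le_rfl B (A₂.imp B ::ₘ Γ) Δ (G4.lw' _ hB)
        · rw [Multiset.cons_swap (A₁.imp B) (A₂.imp B)]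
          exact (IH _ h2).2 A₂ le_rfl B (A₁.imp B ::ₘ Γ) Δ (G4.lw' _ hB)
    | .imp A₁ A₂ =>
        have h1 : wt A₁ < n := by simp [wt] at hA; omega
        have h2 : wt A₂ < n := by simp [wt] at hA; omega
        rw [Multiset.cons_swap]
        apply G4.limpimp
        · apply G4.rimp
          rw [Multiset.cons_swap (A₂.imp B) (A₁.imp A₂)]
          exact (IH _ h1).2 A₁ le_rfl A₂ (A₂.imp B ::ₘ Γ) (some A₂)
            ((IH _ h2).1 A₂ le_rfl _)
        · exact G4.lw' _ hB
    | .box A' =>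
        have h1 : wt A' < n := by simp [wt] at hA; omega
        apply G4.lmimp
        · have := (IH _ h1).1 A' le_rfl 0
          rwa [Multiset.cons_zero] at this
        · exact G4.lw _ _ _ hB

/-- Generalized identity: `Γ, C ⇒ C` is derivable. -/
lemma G4.idF (C : Fm) (Γ : Multiset Fm) : G4 (C ::ₘ Γ) (some C) :=
  (G4.key (wt C)).1 C le_rfl Γ

/-- A derivable conjunction introduction for `bigConj`. -/
lemma conj_right (l : List Fm) (Γ : Multiset Fm)
    (h : ∀ φ ∈ l, G4 Γ (some φ)) : G4 Γ (some (bigConj l)) := by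
  induction l with
  | nil => exact G4.rimp _ _ _ (G4.lbot _ _)
  | cons a l ih =>
      exact G4.rand _ _ _ (h a (by simp)) (ih fun φ hφ => h φ (by simp [hφ]))

/-- A derivable conjunction elimination for `bigConj`. -/
lemma conj_left (l : List Fm) (φ : Fm) (hφ : φ ∈ l) (Γ : Multiset Fm)
    (Δ : Option Fm) (h : G4 (φ ::ₘ Γ) Δ) : G4 (bigConj l ::ₘ Γ) Δ := by
  induction l with
  | nil => simp at hφ
  | cons a l ih =>
      show G4 ((a.and (bigConj l)) ::ₘ Γ) Δ
      apply G4.land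
      rcases List.mem_cons.mp hφ with rfl | hm
      · exact G4.lw' _ h
      · exact G4.lw _ _ _ (ih hm)

/-- The axiom-level uniform interpolant `E = axE Sg p o` satisfies:
(1) `Sg ⇒ E` is derivable in `G4iM`, and (2) for any sequent `C̄ ⇒ D̄` with at
most one succedent formula and `p ∉ V∘(C̄ ⇒ D̄)`, if `Sg, C̄ ⇒ D̄` is an instance
of an axiom (`Ax` or `L⊥`) of `G4iM`, then `E, C̄ ⇒ D̄` is derivable in
`G4iM`. -/
theorem axiom_interpolant (Sg : Multiset Fm) (p : ℕ) (o : Bool) :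
    G4 Sg (some (axE Sg p o)) ∧
    ∀ (C : Multiset Fm) (Dd : Option Fm),
      (∀ γ ∈ C, p ∉ Vb (!o) γ) → (∀ δ ∈ Dd, p ∉ Vb o δ) →
      ((∃ q : ℕ, Fm.atom q ∈ Sg + C ∧ Dd = some (Fm.atom q)) ∨
        Fm.bot ∈ Sg + C) →
      G4 (axE Sg p o ::ₘ C) Dd := by
  constructor
  · apply conj_right
    intro φ hφ
    have hmem : φ ∈ Sg :=
      (Multiset.mem_filter.mp (Multiset.mem_toList.mp hφ)).1
    obtain ⟨Sg', rfl⟩ := Multiset.exists_cons_of_mem hmem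
    exact G4.idF φ Sg'
  · intro C Dd hC hD hax
    rcases hax with ⟨q, hq, rfl⟩ | hbot
    · rcases Multiset.mem_add.mp hq with hS | hC'
      · have hfree : p ∉ Vb o (Fm.atom q) := hD _ rfl
        have hl : Fm.atom q ∈ (Sg.filter fun χ => p ∉ Vb o χ).toList :=
          Multiset.mem_toList.mpr (Multiset.mem_filter.mpr ⟨hS, hfree⟩)
        exact conj_left _ _ hl C _ (G4.ax C q)
      · obtain ⟨C', rfl⟩ := Multiset.exists_cons_of_mem hC'
        rw [Multiset.cons_swap]
        exact G4.ax _ q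
    · rcases Multiset.mem_add.mp hbot with hS | hC'
      · have hfree : p ∉ Vb o Fm.bot := by simp [Vb]
        have hl : Fm.bot ∈ (Sg.filter fun χ => p ∉ Vb o χ).toList :=
          Multiset.mem_toList.mpr (Multiset.mem_filter.mpr ⟨hS, hfree⟩)
        exact conj_left _ _ hl C _ (G4.lbot C Dd)
      · obtain ⟨C', rfl⟩ := Multiset.exists_cons_of_mem hC'
        rw [Multiset.cons_swap]
        exact G4.lbot _ _
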